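/- arXiv:1810.07229 — 4 statements merged into one kernel-verified Lean document; each statement's English description precedes it below -/
import Mathlib

section
/- For any y₁, …, y_k ∈ [0,1], the following lower bound holds: 1 − ∏_{l=1}^k (1 − y_l) ≥ (1 − 1/e) · min(1, ∑_{l=1}^k y_l). -/
theorem product_lower_bound (k : ℕ) (hk : 1 ≤ k) (y : Fin k → ℝ)
    (hy : ∀ l, y l ∈ Set.Icc (0:ℝ) 1) :
    (1 - 1/Real.exp 1) * min 1 (∑ l, y l) ≤ 1 - ∏ l, (1 - y l) := by
  set S := ∑ l, y l with hS
  have hS0 : 0 ≤ S := Finset.sum_nonneg fun l _ => (hy l).1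
  -- product bound: ∏ (1 - y l) ≤ exp (-S)
  have hprod : ∏ l, (1 - y l) ≤ Real.exp (-S) := by
    have : ∏ l, (1 - y l) ≤ ∏ l, Real.exp (-(y l)) := by
      apply Finset.prod_le_prod
      · intro l _; linarith [(hy l).2]
      · intro l _
        have := Real.add_one_le_exp (-(y l)); linarith
    calc ∏ l, (1 - y l) ≤ ∏ l, Real.exp (-(y l)) := this
      _ = Real.exp (∑ l, -(y l)) := (Real.exp_sum _ _).symm
      _ = Real.exp (-S) := by rw [← Finset.sum_neg_distrib]
  have he : Real.exp (-1) = 1 / Real.exp 1 := by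
    rw [Real.exp_neg]; ring
  rcases le_total S 1 with h1 | h1
  · rw [min_eq_right h1]
    -- convexity: exp(-S) ≤ (1-S) + S * exp(-1)
    have hconv : Real.exp (-S) ≤ (1 - S) * Real.exp 0 + S * Real.exp (-1) := by
      have := convexOn_exp.2 (Set.mem_univ (0:ℝ)) (Set.mem_univ (-1:ℝ))
        (by linarith : (0:ℝ) ≤ 1 - S) hS0 (by ring)
      simpa [smul_eq_mul, mul_comm] using this
    rw [Real.exp_zero] at hconv
    rw [he] at hconv
    nlinarith
  · rw [min_eq_left h1]
    have : Real.exp (-S) ≤ Real.exp (-1) := Real.exp_le_exp.2 (by linarith)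
    rw [he] at this
    linarith
end

section
/- Let F(Y) = ∑_{r} λ_r ∑_{k} w_{r,k} (1 − ∏_{l=1}^k (1 − y_{r,l})) and L(Y) = ∑_r λ_r ∑_k w_{r,k} min(1, ∑_{l=1}^k y_{r,l}), where λ_r ≥ 0, w_{r,k} ≥ 0, and each y_{r,l} ∈ [0,1] is a coordinate of Y. Then (1 − 1/e)·L(Y) ≤ F(Y) ≤ L(Y). -/
open Finset

lemma weierstrass (n : ℕ) (f : ℕ → ℝ) (h0 : ∀ l, 0 ≤ f l) (h1 : ∀ l, f l ≤ 1) :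
    1 - ∑ l ∈ range n, f l ≤ ∏ l ∈ range n, (1 - f l) := by
  induction n with
  | zero => simp
  | succ n ih =>
    rw [Finset.sum_range_succ, Finset.prod_range_succ]
    have hs : 0 ≤ ∑ l ∈ range n, f l := Finset.sum_nonneg fun l _ => h0 l
    nlinarith [h0 n, h1 n, ih]

lemma prod_le_exp (n : ℕ) (f : ℕ → ℝ) (h0 : ∀ l, 0 ≤ f l) (h1 : ∀ l, f l ≤ 1) :
    ∏ l ∈ range n, (1 - f l) ≤ Real.exp (-(∑ l ∈ range n, f l)) := by
  calc ∏ l ∈ range n, (1 - f l) ≤ ∏ l ∈ range n, Real.exp (-(f l)) := by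
          apply Finset.prod_le_prod (fun l _ => by linarith [h1 l])
          intro l _
          linarith [Real.add_one_le_exp (-(f l))]
    _ = Real.exp (∑ l ∈ range n, -(f l)) := (Real.exp_sum _ _).symm
    _ = Real.exp (-(∑ l ∈ range n, f l)) := by rw [← Finset.sum_neg_distrib]

lemma chord (s : ℝ) (h0 : 0 ≤ s) (h1 : s ≤ 1) :
    Real.exp (-s) ≤ 1 - s + s / Real.exp 1 := by
  have := convexOn_exp.2 (Set.mem_univ (0:ℝ)) (Set.mem_univ (-1:ℝ))
    (by linarith : (0:ℝ) ≤ 1 - s) h0 (by ring)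
  simp only [smul_eq_mul] at this
  have h : (1 - s) * 0 + s * (-1) = -s := by ring
  rw [h] at this
  rw [Real.exp_zero] at this
  have he : 0 < Real.exp 1 := Real.exp_pos 1
  have h2 : Real.exp (-1) = (Real.exp 1)⁻¹ := Real.exp_neg 1
  calc Real.exp (-s) ≤ (1 - s) * 1 + s * Real.exp (-1) := this
    _ = 1 - s + s / Real.exp 1 := by rw [h2]; field_simp

lemma key (n : ℕ) (f : ℕ → ℝ) (h0 : ∀ l, 0 ≤ f l) (h1 : ∀ l, f l ≤ 1) :
    (1 - 1/Real.exp 1) * min 1 (∑ l ∈ range n, f l) ≤ 1 - ∏ l ∈ range n, (1 - f l)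
    ∧ 1 - ∏ l ∈ range n, (1 - f l) ≤ min 1 (∑ l ∈ range n, f l) := by
  set s := ∑ l ∈ range n, f l with hs
  have hs0 : 0 ≤ s := Finset.sum_nonneg fun l _ => h0 l
  have hp0 : 0 ≤ ∏ l ∈ range n, (1 - f l) :=
    Finset.prod_nonneg fun l _ => by linarith [h1 l]
  have hW := weierstrass n f h0 h1
  have hE := prod_le_exp n f h0 h1
  rw [← hs] at hW hE
  have he : (0:ℝ) < Real.exp 1 := Real.exp_pos 1
  have he1 : 1/Real.exp 1 ≤ 1 := by
    rw [div_le_one he]; linarith [Real.add_one_le_exp (1:ℝ)]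
  constructor
  · rcases le_total s 1 with h | h
    · rw [min_eq_right h]
      have h2 := chord s hs0 h
      have h3 : (1 - 1/Real.exp 1) * s = s - s / Real.exp 1 := by ring
      linarith
    · rw [min_eq_left h]
      have h2 : Real.exp (-s) ≤ Real.exp (-1) := Real.exp_le_exp.2 (by linarith)
      have h3 : Real.exp (-1) = 1/Real.exp 1 := by rw [Real.exp_neg, one_div]
      linarith
  · rcases le_total s 1 with h | h
    · rw [min_eq_right h]; linarith
    · rw [min_eq_left h]; linarith

theorem F_sandwich (R : Type*) [Fintype R] (lam : R → ℝ) (K : R → ℕ)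
    (w : R → ℕ → ℝ) (y : R → ℕ → ℝ)
    (hlam : ∀ r, 0 ≤ lam r) (hw : ∀ r k, 0 ≤ w r k)
    (hy : ∀ r l, y r l ∈ Set.Icc (0:ℝ) 1) :
    (1 - 1/Real.exp 1) *
        (∑ r, lam r * ∑ k ∈ Finset.range (K r),
          w r k * min 1 (∑ l ∈ Finset.range (k+1), y r l)) ≤
      (∑ r, lam r * ∑ k ∈ Finset.range (K r),
        w r k * (1 - ∏ l ∈ Finset.range (k+1), (1 - y r l))) ∧
    (∑ r, lam r * ∑ k ∈ Finset.range (K r),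
        w r k * (1 - ∏ l ∈ Finset.range (k+1), (1 - y r l))) ≤
      ∑ r, lam r * ∑ k ∈ Finset.range (K r),
        w r k * min 1 (∑ l ∈ Finset.range (k+1), y r l) := by
  have hkey := fun r k => key (k+1) (y r) (fun l => (hy r l).1) (fun l => (hy r l).2)
  constructor
  · rw [Finset.mul_sum]
    apply Finset.sum_le_sum
    intro r _
    rw [mul_left_comm, Finset.mul_sum]
    apply mul_le_mul_of_nonneg_left _ (hlam r)
    apply Finset.sum_le_sum
    intro k _
    rw [mul_left_comm]
    exact mul_le_mul_of_nonneg_left (hkey r k).1 (hw r k)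
  · apply Finset.sum_le_sum
    intro r _
    apply mul_le_mul_of_nonneg_left _ (hlam r)
    apply Finset.sum_le_sum
    intro k _
    exact mul_le_mul_of_nonneg_left (hkey r k).2 (hw r k)
end

section
/- The function F : 2^{V×C} → ℝ defined by F(S) = ∑_r λ_r ∑_{k=1}^{|p_r|−1} w_{r,k} (1 − ∏_{l=1}^k 1[(p_{r,l}, i_r) ∉ S]) is monotone nondecreasing and submodular on subsets S of V×C. -/
theorem F_monotone_submodular (V C : Type*) [Fintype V] [Fintype C]
    [DecidableEq V] [DecidableEq C]
    (R : Type*) [Fintype R] (lam : R → ℝ) (it : R → C) (p : R → ℕ → V)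
    (len : R → ℕ) (w : R → ℕ → ℝ)
    (hlam : ∀ r, 0 ≤ lam r) (hw : ∀ r k, 0 ≤ w r k) :
    let F : Finset (V × C) → ℝ := fun S =>
      ∑ r, lam r * ∑ k ∈ Finset.range (len r - 1),
        w r k * (1 - ∏ l ∈ Finset.range (k+1),
          (if (p r l, it r) ∈ S then (0:ℝ) else 1));
    (∀ S T : Finset (V × C), S ⊆ T → F S ≤ F T) ∧
    (∀ S T : Finset (V × C), F (S ∪ T) + F (S ∩ T) ≤ F S + F T) := by
  intro F
  classical
  set P : Finset (V × C) → R → ℕ → ℝ := fun S r k =>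
    ∏ l ∈ Finset.range (k+1), (if (p r l, it r) ∈ S then (0:ℝ) else 1) with hPdef
  have hP : ∀ S r k, P S r k =
      if ∀ l ∈ Finset.range (k+1), (p r l, it r) ∉ S then 1 else 0 := by
    intro S r k
    by_cases h : ∀ l ∈ Finset.range (k+1), (p r l, it r) ∉ S
    · rw [if_pos h]
      exact Finset.prod_eq_one (fun l hl => by rw [if_neg (h l hl)])
    · rw [if_neg h]
      push_neg at h
      obtain ⟨l, hl, hmem⟩ := h
      exact Finset.prod_eq_zero hl (by rw [if_pos hmem])
  have hmono : ∀ S T : Finset (V × C), S ⊆ T → ∀ r k, P T r k ≤ P S r k := by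
    intro S T hST r k
    rw [hP, hP]
    split_ifs with h1 h2
    · exact le_refl _
    · exact absurd (fun l hl hm => h1 l hl (hST hm)) h2
    · norm_num
    · exact le_refl _
  have hsuper : ∀ S T : Finset (V × C), ∀ r k,
      P S r k + P T r k ≤ P (S ∪ T) r k + P (S ∩ T) r k := by
    intro S T r k
    rw [hP, hP, hP, hP]
    by_cases hS : ∀ l ∈ Finset.range (k+1), (p r l, it r) ∉ S
    · by_cases hT : ∀ l ∈ Finset.range (k+1), (p r l, it r) ∉ T
      · rw [if_pos hS, if_pos hT,
          if_pos (fun l hl hm => (Finset.mem_union.mp hm).elim (hS l hl) (hT l hl)),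
          if_pos (fun l hl hm => hS l hl (Finset.mem_inter.mp hm).1)]
      · rw [if_pos hS, if_neg hT,
          if_pos (fun l hl hm => hS l hl (Finset.mem_inter.mp hm).1)]
        split_ifs <;> norm_num
    · by_cases hT : ∀ l ∈ Finset.range (k+1), (p r l, it r) ∉ T
      · rw [if_neg hS, if_pos hT,
          if_pos (fun l hl hm => hT l hl (Finset.mem_inter.mp hm).2)]
        split_ifs <;> norm_num
      · rw [if_neg hS, if_neg hT]
        split_ifs <;> norm_num
  constructor
  · intro S T hST
    apply Finset.sum_le_sum
    intro r _
    apply mul_le_mul_of_nonneg_left _ (hlam r)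
    apply Finset.sum_le_sum
    intro k _
    apply mul_le_mul_of_nonneg_left _ (hw r k)
    linarith [hmono S T hST r k]
  · intro S T
    show (∑ r, lam r * _) + (∑ r, lam r * _) ≤ _
    rw [← Finset.sum_add_distrib, ← Finset.sum_add_distrib]
    apply Finset.sum_le_sum
    intro r _
    rw [← mul_add, ← mul_add]
    apply mul_le_mul_of_nonneg_left _ (hlam r)
    rw [← Finset.sum_add_distrib, ← Finset.sum_add_distrib]
    apply Finset.sum_le_sum
    intro k _
    rw [← mul_add, ← mul_add]
    apply mul_le_mul_of_nonneg_left _ (hw r k)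
    linarith [hsuper S T r k]
end

section
/- Let G = (V, E) be a connected graph and e : V → ℝ. If [e_v]₊ = [e_u]₊ for every edge (v,u) ∈ E, then either e_v ≤ 0 for all v ∈ V, or there exists c ≥ 0 such that e_v = c for all v ∈ V. In either case, for every u ∈ V, [e_u]₊ = (1/|V|)·[∑_{v∈V} e_v]₊. -/
theorem equal_positive_parts (V : Type*) [Fintype V] (G : SimpleGraph V)
    (hG : G.Connected) (e : V → ℝ)
    (h : ∀ v u, G.Adj v u → max (e v) 0 = max (e u) 0) :
    ((∀ v, e v ≤ 0) ∨ ∃ c : ℝ, 0 ≤ c ∧ ∀ v, e v = c) ∧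
      ∀ u, max (e u) 0 = (1 / (Fintype.card V : ℝ)) * max (∑ v, e v) 0 := by
  have hconst : ∀ v u : V, max (e v) 0 = max (e u) 0 := by
    intro v u
    obtain ⟨p⟩ := hG v u
    induction p with
    | nil => rfl
    | cons ha _ ih => exact (h _ _ ha).trans ih
  have hne : Nonempty V := hG.nonempty
  have hcard : 0 < (Fintype.card V : ℝ) := by
    exact_mod_cast Fintype.card_pos
  by_cases hpos : ∃ v, 0 < e v
  · obtain ⟨v0, hv0⟩ := hpos
    have hc : ∀ u, e u = e v0 := by
      intro u
      have h1 := hconst u v0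
      rw [max_eq_left hv0.le] at h1
      have h2 : 0 < max (e u) 0 := h1 ▸ hv0
      have h3 : max (e u) 0 = e u := by
        rcases max_cases (e u) 0 with ⟨h4, _⟩ | ⟨h4, _⟩
        · exact h4
        · exfalso; rw [h4] at h2; exact lt_irrefl 0 h2
      rw [h3] at h1; exact h1
    constructor
    · right; exact ⟨e v0, hv0.le, hc⟩
    · intro u
      have hsum : ∑ v, e v = (Fintype.card V : ℝ) * e v0 := by
        rw [Finset.sum_congr rfl (fun x _ => hc x)]
        simp [Finset.sum_const, Finset.card_univ, mul_comm]
      rw [hc u, hsum, max_eq_left hv0.le,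
        max_eq_left (by positivity : (0:ℝ) ≤ (Fintype.card V : ℝ) * e v0)]
      field_simp
  · push_neg at hpos
    constructor
    · left; exact hpos
    · intro u
      have hsum : ∑ v, e v ≤ 0 :=
        Finset.sum_nonpos fun v _ => hpos v
      rw [max_eq_right (hpos u), max_eq_right hsum, mul_zero]
end
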